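/- arXiv:2303.10837 — 2 statements merged into one kernel-verified Lean document; each statement's English description precedes it below -/
import Mathlib

section
/- Let f : 𝒟 → ℝ be a function on datasets with sensitivity Δf = sup over adjacent pairs D₁, D₂ of |f(D₁) − f(D₂)| finite, and let ε > 0. The mechanism M that on input D outputs f(D) + Z, where Z is Laplace-distributed with location 0 and scale b = Δf/ε, satisfies ε-differential privacy. -/
/-!
Translating the Laplace density by `c` gives the density `x ↦ exp (-|x - c| / b) / (2b)`, and by the
triangle inequality the densities centred at `c₁` and `c₂` differ pointwise by a factor of at most
`exp (|c₁ - c₂| / b)`. For adjacent datasets `|f D₁ - f D₂| ≤ Δf = ε b`, so this factor is at most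
`exp ε`, and integrating over `O` gives the bound. Everything holds for `b ≥ 0`, so the scale
`b = 0` (when `Δf = 0`) needs no separate case: there `x / 0 = 0` makes the Laplace measure zero.
-/

open MeasureTheory

/-- The Laplace distribution with location `0` and scale `b`: the measure on `ℝ` with
density `x ↦ (1/(2b)) · exp (−|x|/b)` with respect to Lebesgue measure. -/
noncomputable def laplaceMeasure (b : ℝ) : Measure ℝ :=
  volume.withDensity fun x => ENNReal.ofReal ((1 / (2 * b)) * Real.exp (-|x| / b))

/-- A mechanism `M`, assigning to each dataset a measure on the output space `Ω`,
satisfies `ε`-differential privacy with respect to the adjacency relation `Adj` if for all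
adjacent datasets `D₁, D₂` and all measurable output sets `O`,
`M D₁ O ≤ exp ε · M D₂ O`. -/
def DiffPrivate {𝒟 : Type*} {Ω : Type*} [MeasurableSpace Ω]
    (Adj : 𝒟 → 𝒟 → Prop) (M : 𝒟 → Measure Ω) (ε : ℝ) : Prop :=
  ∀ D₁ D₂, Adj D₁ D₂ → ∀ O : Set Ω, MeasurableSet O →
    M D₁ O ≤ ENNReal.ofReal (Real.exp ε) * M D₂ O

open scoped ENNReal

theorem MeasureTheory.MeasurePreserving.map_withDensity {α β : Type*} [MeasurableSpace α]
    [MeasurableSpace β] {μ : Measure α} {ν : Measure β} {e : α ≃ᵐ β}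
    (he : MeasurePreserving e μ ν) (g : α → ℝ≥0∞) :
    (μ.withDensity g).map e = ν.withDensity (g ∘ e.symm) := by
  ext s hs
  rw [Measure.map_apply e.measurable hs, withDensity_apply _ (hs.preimage e.measurable),
    withDensity_apply _ hs, ← he.setLIntegral_comp_preimage_emb e.measurableEmbedding]
  simp

theorem map_const_add_laplaceMeasure (b c : ℝ) :
    (laplaceMeasure b).map (c + ·) =
      volume.withDensity fun x => ENNReal.ofReal ((1 / (2 * b)) * Real.exp (-|x - c| / b)) := by
  refine ((measurePreserving_add_left volume c).map_withDensity
    (e := MeasurableEquiv.addLeft c) _).trans ?_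
  simp [Function.comp_def, sub_eq_neg_add]

theorem exp_neg_abs_sub_div_le {b : ℝ} (hb : 0 ≤ b) (x c₁ c₂ : ℝ) :
    Real.exp (-|x - c₁| / b) ≤ Real.exp (|c₁ - c₂| / b) * Real.exp (-|x - c₂| / b) := by
  rw [← Real.exp_add, Real.exp_le_exp, ← add_div]
  gcongr
  have := abs_sub_abs_le_abs_sub (x - c₂) (x - c₁)
  rw [sub_sub_sub_cancel_left] at this
  linarith

theorem map_const_add_laplaceMeasure_le {b : ℝ} (hb : 0 ≤ b) (c₁ c₂ : ℝ) :
    (laplaceMeasure b).map (c₁ + ·) ≤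
      ENNReal.ofReal (Real.exp (|c₁ - c₂| / b)) • (laplaceMeasure b).map (c₂ + ·) := by
  rw [map_const_add_laplaceMeasure, map_const_add_laplaceMeasure,
    ← withDensity_smul' _ _ ENNReal.ofReal_ne_top]
  refine withDensity_mono (ae_of_all _ fun x => ?_)
  simp only [Pi.smul_apply, smul_eq_mul, ← ENNReal.ofReal_mul (Real.exp_nonneg _)]
  refine ENNReal.ofReal_le_ofReal ?_
  rw [mul_left_comm]
  gcongr
  exact exp_neg_abs_sub_div_le hb x c₁ c₂

theorem laplace_mechanism_diffPrivate_general {𝒟 : Type*} (Adj : 𝒟 → 𝒟 → Prop)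
    (f : 𝒟 → ℝ) (Δf : ℝ)
    (hΔ : IsLUB {r : ℝ | ∃ D₁ D₂, Adj D₁ D₂ ∧ r = |f D₁ - f D₂|} Δf)
    (ε : ℝ) (hε : 0 < ε) :
    DiffPrivate Adj
      (fun D => (laplaceMeasure (Δf / ε)).map fun z => f D + z) ε := by
  intro D₁ D₂ hadj O _
  have hdist : |f D₁ - f D₂| ≤ Δf := hΔ.1 ⟨D₁, D₂, hadj, rfl⟩
  have hΔ₀ : 0 ≤ Δf := (abs_nonneg _).trans hdist
  have hb : 0 ≤ Δf / ε := div_nonneg hΔ₀ hε.le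
  have hratio : |f D₁ - f D₂| / (Δf / ε) ≤ ε := by
    rw [div_div_eq_mul_div, mul_div_right_comm]
    exact mul_le_of_le_one_left hε.le (div_le_one_of_le₀ hdist hΔ₀)
  calc _ ≤ (ENNReal.ofReal (Real.exp (|f D₁ - f D₂| / (Δf / ε))) •
          (laplaceMeasure (Δf / ε)).map fun z => f D₂ + z) O :=
        map_const_add_laplaceMeasure_le hb _ _ O
    _ ≤ _ := by
      rw [Measure.smul_apply, smul_eq_mul]
      gcongr

/-- Let `f : 𝒟 → ℝ` have sensitivity `Δf`, the (finite) supremum over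
adjacent pairs `D₁, D₂` of `|f D₁ − f D₂|`, and let `ε > 0`.  The Laplace mechanism
that on input `D` outputs `f D + Z`, where `Z` is Laplace with location `0` and
scale `b = Δf / ε`, satisfies `ε`-differential privacy. -/
theorem laplace_mechanism_diffPrivate {𝒟 : Type*} (Adj : 𝒟 → 𝒟 → Prop)
    (hsym : Symmetric Adj) (f : 𝒟 → ℝ) (Δf : ℝ)
    (hΔ : IsLUB {r : ℝ | ∃ D₁ D₂, Adj D₁ D₂ ∧ r = |f D₁ - f D₂|} Δf)
    (ε : ℝ) (hε : 0 < ε) :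
    DiffPrivate Adj
      (fun D => (laplaceMeasure (Δf / ε)).map fun z => f D + z) ε :=
  laplace_mechanism_diffPrivate_general Adj f Δf hΔ ε hε
end

section
/- Let f : 𝒟 → ℝ^d be a function on datasets with ℓ₁-sensitivity Δf = sup over adjacent pairs D₁, D₂ of ‖f(D₁) − f(D₂)‖₁ finite, and let ε > 0. The mechanism M that on input D outputs f(D) + (Z₁, …, Z_d), where Z₁, …, Z_d are independent Laplace random variables with location 0 and scale b = Δf/ε, satisfies ε-differential privacy. -/
/-!
A Laplace density `p_b` satisfies `p_b (x - v) ≤ exp (|v| / b) · p_b x` by the triangle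
inequality, so the product density on `ℝ^d` satisfies the same bound with `‖v‖₁` in place of
`|v|`. Translating the noise by `f D₁` instead of `f D₂` therefore inflates every probability by
at most `exp (‖f D₁ - f D₂‖₁ / b) ≤ exp (Δf / b) = exp ε`.
-/

open MeasureTheory
open scoped ENNReal

namespace MeasureTheory

theorem lintegral_fin_nat_prod_eq_prod {n : ℕ} {E : Fin n → Type*}
    {mE : ∀ i, MeasurableSpace (E i)} {μ : (i : Fin n) → Measure (E i)} [∀ i, SigmaFinite (μ i)]
    {g : (i : Fin n) → E i → ℝ≥0∞} (hg : ∀ i, Measurable (g i)) :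
    ∫⁻ x : (i : Fin n) → E i, ∏ i, g i (x i) ∂Measure.pi μ = ∏ i, ∫⁻ t, g i t ∂μ i := by
  induction n with
  | zero => simp
  | succ n ih =>
    let e := MeasurableEquiv.piFinSuccAbove E 0
    calc
      _ = ∫⁻ x : E 0 × ((j : Fin n) → E (Fin.succAbove 0 j)),
            g 0 x.1 * ∏ j, g (Fin.succAbove 0 j) (x.2 j)
            ∂(μ 0).prod (Measure.pi fun j ↦ μ (Fin.succAbove 0 j)) := by
        rw [← (measurePreserving_piFinSuccAbove μ 0).symm.lintegral_comp_emb
          e.symm.measurableEmbedding]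
        refine lintegral_congr fun x ↦ ?_
        simp only [Fin.prod_univ_succAbove _ 0, MeasurableEquiv.piFinSuccAbove_symm_apply,
          Fin.insertNthEquiv, Equiv.coe_fn_mk, Fin.insertNth_apply_same,
          Fin.insertNth_apply_succAbove]
      _ = (∫⁻ t, g 0 t ∂μ 0) * ∏ j, ∫⁻ t, g (Fin.succAbove 0 j) t ∂μ (Fin.succAbove 0 j) := by
        rw [← ih fun j ↦ hg _]
        exact lintegral_prod_mul (hg 0).aemeasurable
          (Finset.measurable_prod _ fun j _ ↦ (hg _).comp (measurable_pi_apply j)).aemeasurable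
      _ = ∏ i, ∫⁻ t, g i t ∂μ i := (Fin.prod_univ_succAbove (fun i ↦ ∫⁻ t, g i t ∂μ i) 0).symm

theorem lintegral_fintype_prod_eq_prod {ι : Type*} [Fintype ι] {E : ι → Type*}
    {mE : ∀ i, MeasurableSpace (E i)} {μ : (i : ι) → Measure (E i)} [∀ i, SigmaFinite (μ i)]
    {g : (i : ι) → E i → ℝ≥0∞} (hg : ∀ i, Measurable (g i)) :
    ∫⁻ x : (i : ι) → E i, ∏ i, g i (x i) ∂Measure.pi μ = ∏ i, ∫⁻ t, g i t ∂μ i := by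
  let e := (Fintype.equivFin ι).symm
  rw [← (measurePreserving_piCongrLeft μ e).lintegral_comp_emb
    (MeasurableEquiv.measurableEmbedding _)]
  simp_rw [← e.prod_comp, MeasurableEquiv.coe_piCongrLeft, Equiv.piCongrLeft_apply_apply]
  exact lintegral_fin_nat_prod_eq_prod fun i ↦ hg (e i)

namespace Measure

theorem pi_withDensity {ι : Type*} [Fintype ι] {E : ι → Type*} [∀ i, MeasurableSpace (E i)]
    (μ : (i : ι) → Measure (E i)) [∀ i, SigmaFinite (μ i)]
    {ρ : (i : ι) → E i → ℝ≥0∞} (hρ : ∀ i, Measurable (ρ i))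
    [∀ i, SigmaFinite ((μ i).withDensity (ρ i))] :
    Measure.pi (fun i ↦ (μ i).withDensity (ρ i))
      = (Measure.pi μ).withDensity fun x ↦ ∏ i, ρ i (x i) := by
  refine pi_eq fun s hs ↦ ?_
  rw [withDensity_apply _ (MeasurableSet.univ_pi hs), restrict_pi_pi,
    lintegral_fintype_prod_eq_prod hρ]
  exact Finset.prod_congr rfl fun i _ ↦ (withDensity_apply _ (hs i)).symm

variable {G : Type*} [MeasurableSpace G] [AddGroup G] [MeasurableAdd G]
  (ν : Measure G) [ν.IsAddLeftInvariant] {ρ : G → ℝ≥0∞}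

theorem map_add_left_withDensity (hρ : Measurable ρ) (a : G) :
    (ν.withDensity ρ).map (a + ·) = ν.withDensity fun y ↦ ρ (-a + y) := by
  ext s hs
  have hshift : Measurable (a + ·) := measurable_const_add a
  rw [map_apply hshift hs, withDensity_apply _ (hshift hs), withDensity_apply _ hs]
  conv_rhs => rw [← map_add_left_eq_self ν a]
  rw [setLIntegral_map (f := fun y ↦ ρ (-a + y)) hs (hρ.comp (measurable_const_add (-a))) hshift]
  simp only [neg_add_cancel_left]

theorem map_add_left_withDensity_le (hρ : Measurable ρ) {a b : G} {c : ℝ≥0∞}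
    (hbound : ∀ x, ρ (-a + b + x) ≤ c * ρ x) :
    (ν.withDensity ρ).map (a + ·) ≤ c • (ν.withDensity ρ).map (b + ·) := by
  rw [map_add_left_withDensity ν hρ, map_add_left_withDensity ν hρ,
    ← withDensity_smul c (f := fun y ↦ ρ (-b + y)) (hρ.comp (measurable_const_add (-b)))]
  refine withDensity_mono (Filter.Eventually.of_forall fun y ↦ ?_)
  simpa only [Pi.smul_apply, smul_eq_mul, add_assoc, add_neg_cancel_left] using hbound (-b + y)

end Measure

end MeasureTheory

noncomputable def laplacePDF (b x : ℝ) : ℝ≥0∞ :=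
  ENNReal.ofReal ((1 / (2 * b)) * Real.exp (-|x| / b))

theorem measurable_laplacePDF (b : ℝ) : Measurable (laplacePDF b) := by
  unfold laplacePDF
  fun_prop

instance (b : ℝ) : SigmaFinite (laplaceMeasure b) :=
  SigmaFinite.withDensity_ofReal _

-- `b = 0` is allowed: then `1 / (2 * b) = 0` and the density vanishes identically.
theorem laplacePDF_sub_le {b : ℝ} (hb : 0 ≤ b) (x v : ℝ) :
    laplacePDF b (x - v) ≤ ENNReal.ofReal (Real.exp (|v| / b)) * laplacePDF b x := by
  rw [laplacePDF, laplacePDF, ← ENNReal.ofReal_mul (Real.exp_nonneg _)]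
  refine ENNReal.ofReal_le_ofReal ?_
  rw [mul_left_comm, ← Real.exp_add]
  have htriangle : -|x - v| ≤ |v| + -|x| := by linarith [abs_sub_abs_le_abs_sub x v]
  gcongr
  rw [← add_div]
  exact div_le_div_of_nonneg_right htriangle hb

theorem prod_laplacePDF_sub_le {ι : Type*} [Fintype ι] {b : ℝ} (hb : 0 ≤ b) (x v : ι → ℝ) :
    ∏ i, laplacePDF b (x i - v i)
      ≤ ENNReal.ofReal (Real.exp ((∑ i, |v i|) / b)) * ∏ i, laplacePDF b (x i) := by
  calc ∏ i, laplacePDF b (x i - v i)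
      ≤ ∏ i, ENNReal.ofReal (Real.exp (|v i| / b)) * laplacePDF b (x i) :=
        Finset.prod_le_prod' fun i _ ↦ laplacePDF_sub_le hb (x i) (v i)
    _ = _ := by
        rw [Finset.prod_mul_distrib, ← ENNReal.ofReal_prod_of_nonneg fun i _ ↦ Real.exp_nonneg _,
          ← Real.exp_sum, Finset.sum_div]

theorem pi_laplaceMeasure_eq_withDensity {ι : Type*} [Fintype ι] (b : ℝ) :
    Measure.pi (fun _ : ι ↦ laplaceMeasure b)
      = volume.withDensity fun x ↦ ∏ i, laplacePDF b (x i) :=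
  Measure.pi_withDensity _ fun _ ↦ measurable_laplacePDF b

theorem map_add_pi_laplaceMeasure_le {ι : Type*} [Fintype ι] {b : ℝ} (hb : 0 ≤ b)
    (a a' : ι → ℝ) :
    (Measure.pi fun _ : ι ↦ laplaceMeasure b).map (a + ·)
      ≤ ENNReal.ofReal (Real.exp ((∑ i, |a i - a' i|) / b))
        • (Measure.pi fun _ : ι ↦ laplaceMeasure b).map (a' + ·) := by
  rw [pi_laplaceMeasure_eq_withDensity]
  refine Measure.map_add_left_withDensity_le _
    (Finset.measurable_prod _ fun i _ ↦ (measurable_laplacePDF b).comp (measurable_pi_apply i))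
    fun x ↦ ?_
  rw [show -a + a' + x = x - (a - a') by abel]
  exact prod_laplacePDF_sub_le hb x (a - a')

theorem laplace_mechanism_vector_diffPrivate_general {𝒟 : Type*} (d : ℕ)
    (Adj : 𝒟 → 𝒟 → Prop)
    (f : 𝒟 → (Fin d → ℝ)) (Δf : ℝ)
    (hΔ : IsLUB {r : ℝ | ∃ D₁ D₂, Adj D₁ D₂ ∧
      r = ∑ i : Fin d, |f D₁ i - f D₂ i|} Δf)
    (ε : ℝ) (hε : 0 < ε) :
    DiffPrivate Adj
      (fun D => (Measure.pi fun _ : Fin d => laplaceMeasure (Δf / ε)).map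
        fun z => f D + z) ε := by
  intro D₁ D₂ hadj O _
  have hsens : ∑ i, |f D₁ i - f D₂ i| ≤ Δf := hΔ.1 ⟨D₁, D₂, hadj, rfl⟩
  have hΔf : 0 ≤ Δf := (Finset.sum_nonneg fun i _ ↦ abs_nonneg _).trans hsens
  have hb : 0 ≤ Δf / ε := div_nonneg hΔf hε.le
  have hloss : (∑ i, |f D₁ i - f D₂ i|) / (Δf / ε) ≤ ε := by
    refine (div_le_div_of_nonneg_right hsens hb).trans ?_
    rcases hΔf.eq_or_lt with rfl | hpos
    · simpa using hε.le
    · rw [div_div_cancel₀ hpos.ne']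
  calc _ ≤ ENNReal.ofReal (Real.exp ((∑ i, |f D₁ i - f D₂ i|) / (Δf / ε))) * _ :=
        (map_add_pi_laplaceMeasure_le hb (f D₁) (f D₂) O).trans_eq (Measure.smul_apply ..)
    _ ≤ ENNReal.ofReal (Real.exp ε) * _ := by gcongr

/-- Let `f : 𝒟 → ℝ^d` have ℓ₁-sensitivity `Δf`, the (finite) supremum over
adjacent pairs `D₁, D₂` of `‖f D₁ − f D₂‖₁ = ∑ i, |f D₁ i − f D₂ i|`, and let `ε > 0`.
The mechanism that on input `D` outputs `f D + (Z₁, …, Z_d)`, with `Z₁, …, Z_d`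
independent Laplace variables of location `0` and scale `b = Δf / ε` (i.e. the image
under `z ↦ f D + z` of the `d`-fold product of Laplace measures),
satisfies `ε`-differential privacy. -/
theorem laplace_mechanism_vector_diffPrivate {𝒟 : Type*} (d : ℕ)
    (Adj : 𝒟 → 𝒟 → Prop) (hsym : Symmetric Adj)
    (f : 𝒟 → (Fin d → ℝ)) (Δf : ℝ)
    (hΔ : IsLUB {r : ℝ | ∃ D₁ D₂, Adj D₁ D₂ ∧
      r = ∑ i : Fin d, |f D₁ i - f D₂ i|} Δf)
    (ε : ℝ) (hε : 0 < ε) :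
    DiffPrivate Adj
      (fun D => (Measure.pi fun _ : Fin d => laplaceMeasure (Δf / ε)).map
        fun z => f D + z) ε :=
  laplace_mechanism_vector_diffPrivate_general d Adj f Δf hΔ ε hε
end
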